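/- Let (M, ∘, e) be an F-manifold with an eventual identity ε and a compatible, torsion-free connection ∇̃, and let X * Y := X ∘ Y ∘ ε^{-1}. The second structure connection ∇^F_X(Y) := ε ∘ ∇̃_X(ε^{-1} ∘ Y) − ∇̃_{ε^{-1}∘Y}(ε) ∘ X is torsion-free and compatible with * on the dual F-manifold (M, *, ε), and it belongs to the family of connections ∇^A_X(Y) = ε∘∇̃_X(ε^{-1}∘Y) + A(Y)∘X with A(Y) = ε∘∇̃_Y(ε^{-1}) + V∘Y for a vector field V. -/

import Mathlib

/-- An algebraic model of the geometric setting of the paper: `R` plays the role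
of the ring `C^∞(M)` of smooth functions on a manifold `M`, and `V` plays the
role of the `C^∞(M)`-module of smooth vector fields on `M`, equipped with its
Lie bracket and with the action of vector fields on functions by derivations. -/
structure SmoothSetting (R V : Type*) [CommRing R] [LieRing V] [Module R V] where
  /-- the action `X(f)` of a vector field `X` on a function `f` -/
  deriv : V → R → R
  deriv_add : ∀ (X : V) (f g : R), deriv X (f + g) = deriv X f + deriv X g
  deriv_mul : ∀ (X : V) (f g : R), deriv X (f * g) = deriv X f * g + f * deriv X g
  add_deriv : ∀ (X Y : V) (f : R), deriv (X + Y) f = deriv X f + deriv Y f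
  smul_deriv : ∀ (f : R) (X : V) (g : R), deriv (f • X) g = f * deriv X g
  bracket_deriv : ∀ (X Y : V) (f : R),
    deriv ⁅X, Y⁆ f = deriv X (deriv Y f) - deriv Y (deriv X f)
  bracket_smul : ∀ (X : V) (f : R) (Y : V), ⁅X, f • Y⁆ = f • ⁅X, Y⁆ + deriv X f • Y

/-- `(m, e)` is an F-manifold structure: `m` is a fiber-preserving (i.e.
`C^∞(M)`-bilinear) commutative associative multiplication on vector fields with
unit field `e`, satisfying the Hertling–Manin integrability condition
`L_{X∘Y}(∘) = X ∘ L_Y(∘) + Y ∘ L_X(∘)`. -/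
structure IsFManifold (R : Type*) {V : Type*} [CommRing R] [LieRing V] [Module R V]
    (m : V → V → V) (e : V) : Prop where
  add_left : ∀ X Y Z : V, m (X + Y) Z = m X Z + m Y Z
  smul_left : ∀ (f : R) (X Y : V), m (f • X) Y = f • m X Y
  comm : ∀ X Y : V, m X Y = m Y X
  assoc : ∀ X Y Z : V, m (m X Y) Z = m X (m Y Z)
  unit : ∀ X : V, m e X = X
  hertling_manin : ∀ X Y Z W : V,
    ⁅m X Y, m Z W⁆ - m ⁅m X Y, Z⁆ W - m Z ⁅m X Y, W⁆ =
      m X (⁅Y, m Z W⁆ - m ⁅Y, Z⁆ W - m Z ⁅Y, W⁆)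
        + m Y (⁅X, m Z W⁆ - m ⁅X, Z⁆ W - m Z ⁅X, W⁆)

/-- The dual multiplication `X * Y := X ∘ Y ∘ ε⁻¹` determined by an invertible
vector field `ε` with inverse `εinv`. -/
def dualMul {V : Type*} (m : V → V → V) (εinv : V) : V → V → V :=
  fun X Y => m (m X Y) εinv

/-- `ε` (with inverse `εinv`) is an eventual identity on the F-manifold `(m, e)`:
it is invertible and the dual multiplication `X * Y = X ∘ Y ∘ ε⁻¹` defines an
F-manifold structure on `M` with unit field `ε`. -/
def IsEventualIdentity (R : Type*) {V : Type*} [CommRing R] [LieRing V] [Module R V]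
    (m : V → V → V) (e ε εinv : V) : Prop :=
  m ε εinv = e ∧ IsFManifold R (dualMul m εinv) ε

/-- `nabla` is a (Koszul) connection on the tangent bundle, i.e. on vector fields. -/
structure IsConnection {R V : Type*} [CommRing R] [LieRing V] [Module R V]
    (S : SmoothSetting R V) (nabla : V → V → V) : Prop where
  add_left : ∀ X Y Z : V, nabla (X + Y) Z = nabla X Z + nabla Y Z
  smul_left : ∀ (f : R) (X Y : V), nabla (f • X) Y = f • nabla X Y
  add_right : ∀ X Y Z : V, nabla X (Y + Z) = nabla X Y + nabla X Z
  leibniz : ∀ (X : V) (f : R) (Y : V), nabla X (f • Y) = S.deriv X f • Y + f • nabla X Y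

/-- `nabla` is torsion-free. -/
def IsTorsionFree {V : Type*} [LieRing V] (nabla : V → V → V) : Prop :=
  ∀ X Y, nabla X Y - nabla Y X = ⁅X, Y⁆

/-- The covariant derivative `∇_X(∘)(Y, Z)` of a multiplication `m` with respect
to a connection `nabla`. -/
def covMul {V : Type*} [LieRing V] (nabla m : V → V → V) (X Y Z : V) : V :=
  nabla X (m Y Z) - m (nabla X Y) Z - m Y (nabla X Z)

/-- `nabla` is compatible with the multiplication `m`: the vector valued tensor
`∇(∘)` is totally symmetric. -/
def IsCompatible {V : Type*} [LieRing V] (nabla m : V → V → V) : Prop :=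
  ∀ X Y Z, covMul nabla m X Y Z = covMul nabla m Y X Z ∧
    covMul nabla m X Y Z = covMul nabla m X Z Y

/-- The curvature `R^∇_{X,Y}Z = ∇_X∇_Y Z − ∇_Y∇_X Z − ∇_{[X,Y]}Z`. -/
def curv {V : Type*} [LieRing V] (nabla : V → V → V) (X Y Z : V) : V :=
  nabla X (nabla Y Z) - nabla Y (nabla X Z) - nabla ⁅X, Y⁆ Z

/-- `nabla` is flat. -/
def IsFlat {V : Type*} [LieRing V] (nabla : V → V → V) : Prop :=
  ∀ X Y Z, curv nabla X Y Z = 0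

/-- The curvature condition
`V∘R_{Z,Y}X + Y∘R_{V,Z}X + Z∘R_{Y,V}X = 0` of Lorenzoni–Pedroni. -/
def CurvCircCond {V : Type*} [LieRing V] (m nabla : V → V → V) : Prop :=
  ∀ X Y Z W, m W (curv nabla Z Y X) + m Y (curv nabla W Z X)
    + m Z (curv nabla Y W X) = 0

/-- A special family of connections on the F-manifold `(m, e)`: the family of
all `∇̃^V_X(Y) = ∇̃_X(Y) + V∘X∘Y`, `V` a vector field, where `∇̃` is some
torsion-free connection compatible with `m`. -/
def IsSpecialFamily {R V : Type*} [CommRing R] [LieRing V] [Module R V]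
    (S : SmoothSetting R V) (m : V → V → V) (SF : Set (V → V → V)) : Prop :=
  ∃ nt : V → V → V, IsConnection S nt ∧ IsTorsionFree nt ∧ IsCompatible nt m ∧
    SF = { n | ∃ W : V, n = fun X Y => nt X Y + m (m W X) Y }

/-- The connection `∇^W_X(Y) = ε∘∇̃_X(ε⁻¹∘Y) − ∇̃_{ε⁻¹∘Y}(ε)∘X + W*X*Y` on the
dual F-manifold, where `*` is the dual multiplication. -/
def dualConn {V : Type*} [LieRing V] (m : V → V → V) (ε εinv : V)
    (nt : V → V → V) (W : V) : V → V → V :=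
  fun X Y => m ε (nt X (m εinv Y)) - m (nt (m εinv Y) ε) X
    + dualMul m εinv (dualMul m εinv W X) Y

/-- The dual family `D_ε(S̃)` built from a chosen connection `nt ∈ S̃`. -/
def dualFamily {V : Type*} [LieRing V] (m : V → V → V) (ε εinv : V)
    (nt : V → V → V) : Set (V → V → V) :=
  { n | ∃ W : V, n = dualConn m ε εinv nt W }

/-- The dual family `D_ε(S̃)` of a family of connections `S̃`. -/
def dualFamilyOfSet {V : Type*} [LieRing V] (m : V → V → V) (ε εinv : V)
    (SF : Set (V → V → V)) : Set (V → V → V) :=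
  { n | ∃ nt ∈ SF, ∃ W : V, n = dualConn m ε εinv nt W }

/-- The second structure connection
`∇^F_X(Y) = ε∘∇̃_X(ε⁻¹∘Y) − ∇̃_{ε⁻¹∘Y}(ε)∘X` of `(M, ∘, e, ε, ∇̃)`. -/
def secondConn {V : Type*} [LieRing V] (m : V → V → V) (ε εinv : V)
    (nt : V → V → V) : V → V → V :=
  fun X Y => m ε (nt X (m εinv Y)) - m (nt (m εinv Y) ε) X

/-- The connection
`∇_X(Y) = ε∘∇̃_X(ε⁻¹∘Y) − ∇̃_{ε⁻¹∘Y}(ε)∘X + (1/2)[ε⁻¹,ε]∘X∘Y + U*X*Y`. -/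
def uDualConn {V : Type*} [LieRing V] [Module ℚ V] (m : V → V → V)
    (ε εinv U : V) (nt : V → V → V) : V → V → V :=
  fun X Y => secondConn m ε εinv nt X Y + (2 : ℚ)⁻¹ • m (m ⁅εinv, ε⁆ X) Y
    + dualMul m εinv (dualMul m εinv U X) Y

/-- The `k`-th power `X^k` of a vector field with respect to the multiplication
`m` with unit `e`. -/
def mpow {V : Type*} (m : V → V → V) (e X : V) : ℕ → V
  | 0 => e
  | k + 1 => m X (mpow m e X k)

/-- The Legendre transformation `L_u(S̃) = { u⁻¹∘∇̃_X(u∘Y) : ∇̃ ∈ S̃ }` of a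
family of connections `S̃` by an invertible vector field `u` (with inverse
`uinv`). -/
def legFamily {V : Type*} (m : V → V → V) (uinv u : V)
    (SF : Set (V → V → V)) : Set (V → V → V) :=
  { n | ∃ nt ∈ SF, n = fun X Y => m uinv (nt X (m u Y)) }

/-! Under `∘` the vector fields form a commutative ring with unit `e` (on the additive group of
`V`), so every identity below is a ring identity among `∇̃`- and bracket-terms. The unit of an
F-manifold preserves its multiplication; applied to the dual F-manifold `(M, *, ε)` this gives
`L_ε(∘) = [e, ε]∘`, and with torsion-freeness
`∇̃_ε(∘)(X, Y) = ∇̃_{X∘Y}ε − Y∘∇̃_Xε − X∘∇̃_Yε + [e, ε]∘X∘Y`.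
By compatibility this turns into `∇^F_X Y = ∇̃_X Y − ∇̃_{X*Y}ε − [e, ε]∘(X*Y)`, torsion-free
because `*` is commutative. For compatibility, write the arguments as `ε∘x`, `ε∘y`, `ε∘z`:
then `∇^F(*)` is `ε∘∇̃(∘)` corrected by `∇̃ε`-terms, and its total symmetry reduces to that of
`∇̃(∘)`, the formula for `∇̃_ε(∘)`, and the derivative of the associativity of `∘`. -/

namespace IsFManifold

variable {R V : Type*} [CommRing R] [LieRing V] [Module R V] {m : V → V → V} {e : V}

theorem add_right (hF : IsFManifold R m e) (X Y Z : V) : m X (Y + Z) = m X Y + m X Z := by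
  rw [hF.comm, hF.add_left, hF.comm Y, hF.comm Z]

theorem smul_right (hF : IsFManifold R m e) (f : R) (X Y : V) : m X (f • Y) = f • m X Y := by
  rw [hF.comm, hF.smul_left, hF.comm]

theorem zero_left (hF : IsFManifold R m e) (X : V) : m 0 X = 0 := by
  simpa using hF.add_left 0 0 X

theorem mul_unit (hF : IsFManifold R m e) (X : V) : m X e = X := by
  rw [hF.comm, hF.unit]

abbrev toCommRing (hF : IsFManifold R m e) : CommRing V :=
  { (inferInstance : AddCommGroup V) with
    mul := m
    one := e
    mul_assoc := hF.assoc
    mul_comm := hF.comm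
    one_mul := hF.unit
    mul_one := hF.mul_unit
    left_distrib := hF.add_right
    right_distrib := hF.add_left
    zero_mul := hF.zero_left
    mul_zero := fun X => (hF.comm X 0).trans (hF.zero_left X) }

theorem mul_inv_cancel_left (hF : IsFManifold R m e) {ε εinv : V} (hinv : m ε εinv = e) (X : V) :
    m ε (m εinv X) = X := by
  rw [← hF.assoc, hinv, hF.unit]

theorem lie_unit_mul (hF : IsFManifold R m e) (X Y : V) :
    ⁅e, m X Y⁆ = m ⁅e, X⁆ Y + m X ⁅e, Y⁆ := by
  have h := hF.hertling_manin e e X Y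
  simp only [hF.unit] at h
  rw [left_eq_add, sub_sub, sub_eq_zero] at h
  exact h

theorem covMul_assoc (hF : IsFManifold R m e) (nabla : V → V → V) (X a b c : V) :
    covMul nabla m X (m a b) c + m (covMul nabla m X a b) c =
      covMul nabla m X a (m b c) + m a (covMul nabla m X b c) := by
  let := hF.toCommRing
  have hm (a b : V) : m a b = a * b := rfl
  simp only [covMul, hm, mul_assoc]
  ring

end IsFManifold

namespace IsCompatible

variable {R V : Type*} [CommRing R] [LieRing V] [Module R V] {m : V → V → V} {e : V}
  {nabla : V → V → V}

theorem nabla_unit (hF : IsFManifold R m e) (hcm : IsCompatible nabla m) (X : V) :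
    nabla X e = m (nabla e e) X := by
  let := hF.toCommRing
  have hm (a b : V) : m a b = a * b := rfl
  have he : e = 1 := rfl
  have h := (hcm X e e).1.trans (hcm e X e).2
  simp only [covMul, hm, he, one_mul, mul_one] at h ⊢
  linear_combination -h

theorem covMul_mul_left_eq (hF : IsFManifold R m e) (hcm : IsCompatible nabla m) (a x y z : V) :
    covMul nabla m (m a x) y z =
      covMul nabla m a (m x y) z + m a (covMul nabla m x y z) - m y (covMul nabla m a x z) := by
  let := hF.toCommRing
  have hm (a b : V) : m a b = a * b := rfl
  have hyax := hF.covMul_assoc nabla y a x z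
  have haxy := hF.covMul_assoc nabla a y x z
  have h1 := (hcm (a * x) y z).1
  have h2 := (hcm y a (x * z)).1
  have h3 := (hcm y a x).1
  have h4 := (hcm y x z).1
  simp only [hm] at hyax haxy h1 h2 h3 h4 ⊢
  rw [mul_comm y x] at haxy
  linear_combination h1 + hyax + h2 - haxy + a * h4 - z * h3

end IsCompatible

namespace IsEventualIdentity

variable {R V : Type*} [CommRing R] [LieRing V] [Module R V] {m : V → V → V} {e ε εinv : V}

theorem lie_mul (hF : IsFManifold R m e) (hev : IsEventualIdentity R m e ε εinv) (X Y : V) :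
    ⁅ε, m X Y⁆ = m ⁅ε, X⁆ Y + m X ⁅ε, Y⁆ + m ⁅e, ε⁆ (m X Y) := by
  obtain ⟨hinv, hdual⟩ := hev
  let := hF.toCommRing
  have hm (a b : V) : m a b = a * b := rfl
  have hinv' : ε * εinv = 1 := hinv
  have hdual_unit (a b : V) : ⁅ε, a * b * εinv⁆ = ⁅ε, a⁆ * b * εinv + a * ⁅ε, b⁆ * εinv :=
    hdual.lie_unit_mul a b
  have hcancel (a b : V) : ε * a * b * εinv = a * b := by linear_combination a * b * hinv'
  have hL (a b : V) : ⁅ε, a * b⁆ = εinv * ⁅ε, ε * a⁆ * b + a * ⁅ε, b⁆ := by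
    have h := hdual_unit (ε * a) b
    rw [hcancel] at h
    linear_combination h + a * ⁅ε, b⁆ * hinv'
  have hL1 (a : V) : εinv * ⁅ε, ε * a⁆ = ⁅ε, a⁆ - a * ⁅ε, 1⁆ := by
    have h := hL a 1
    rw [mul_one, mul_one] at h
    linear_combination -h
  have he : e = 1 := rfl
  simp only [hm, he]
  rw [hL, hL1, ← lie_skew (1 : V) ε]
  ring

theorem covMul_eps (hF : IsFManifold R m e) (hev : IsEventualIdentity R m e ε εinv)
    {nabla : V → V → V} (htf : IsTorsionFree nabla) (X Y : V) :
    covMul nabla m ε X Y =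
      nabla (m X Y) ε - m Y (nabla X ε) - m X (nabla Y ε) + m ⁅e, ε⁆ (m X Y) := by
  let := hF.toCommRing
  have hm (a b : V) : m a b = a * b := rfl
  have hlie := hev.lie_mul hF X Y
  have tXY := htf ε (X * Y)
  have tX := htf ε X
  have tY := htf ε Y
  simp only [covMul, hm] at hlie ⊢
  linear_combination tXY - Y * tX - X * tY + hlie

end IsEventualIdentity

section SecondStructureConnection

variable {R V : Type*} [CommRing R] [LieRing V] [Module R V] {m : V → V → V} {e ε εinv : V}
  {nt : V → V → V}

theorem isConnection_secondConn (S : SmoothSetting R V) (hF : IsFManifold R m e)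
    (hinv : m ε εinv = e) (hc : IsConnection S nt) : IsConnection S (secondConn m ε εinv nt) where
  add_left X Y Z := by
    simp only [secondConn]
    rw [hc.add_left, hF.add_right, hF.add_right]
    abel
  smul_left f X Y := by
    simp only [secondConn]
    rw [hc.smul_left, hF.smul_right, hF.smul_right, smul_sub]
  add_right X Y Z := by
    simp only [secondConn]
    rw [hF.add_right εinv, hc.add_right, hF.add_right, hc.add_left, hF.add_left]
    abel
  leibniz X f Y := by
    simp only [secondConn]
    rw [hF.smul_right f εinv, hc.leibniz, hF.add_right, hF.smul_right, hF.smul_right,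
      hF.mul_inv_cancel_left hinv, hc.smul_left, hF.smul_left, smul_sub]
    abel

theorem secondConn_eq (hF : IsFManifold R m e) (hev : IsEventualIdentity R m e ε εinv)
    (htf : IsTorsionFree nt) (hcm : IsCompatible nt m) (X Y : V) :
    secondConn m ε εinv nt X Y =
      nt X Y - nt (dualMul m εinv X Y) ε - m ⁅e, ε⁆ (dualMul m εinv X Y) := by
  let := hF.toCommRing
  have hm (a b : V) : m a b = a * b := rfl
  have hinv : ε * εinv = 1 := hev.1
  have hsymm := (hcm X ε (εinv * Y)).1
  have h := hev.covMul_eps hF htf X (εinv * Y)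
  simp only [secondConn, dualMul, covMul, hm] at hsymm h ⊢
  rw [show ε * (εinv * Y) = Y by linear_combination Y * hinv] at hsymm
  rw [show X * (εinv * Y) = X * Y * εinv by ring] at hsymm h
  linear_combination -hsymm - h

theorem isTorsionFree_secondConn (hF : IsFManifold R m e) (hev : IsEventualIdentity R m e ε εinv)
    (htf : IsTorsionFree nt) (hcm : IsCompatible nt m) : IsTorsionFree (secondConn m ε εinv nt) := by
  intro X Y
  rw [secondConn_eq hF hev htf hcm, secondConn_eq hF hev htf hcm, dualMul, dualMul, hF.comm Y X,
    ← htf X Y]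
  abel

theorem covMul_secondConn_mul_left (hF : IsFManifold R m e) (hinv : m ε εinv = e) (X y z : V) :
    covMul (secondConn m ε εinv nt) (dualMul m εinv) X (m ε y) (m ε z) =
      m ε (covMul nt m X y z) - m X (nt (m y z) ε - m z (nt y ε) - m y (nt z ε)) := by
  let := hF.toCommRing
  have hm (a b : V) : m a b = a * b := rfl
  have hinv' : ε * εinv = 1 := hinv
  simp only [covMul, secondConn, dualMul, hm]
  rw [show εinv * (ε * y * (ε * z) * εinv) = y * z by
      linear_combination (ε * εinv + 1) * (y * z) * hinv',
    show εinv * (ε * y) = y by linear_combination y * hinv',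
    show εinv * (ε * z) = z by linear_combination z * hinv']
  linear_combination (X * z * nt y ε + X * y * nt z ε - ε * z * nt X y - ε * y * nt X z) * hinv'

theorem isCompatible_secondConn (hF : IsFManifold R m e) (hev : IsEventualIdentity R m e ε εinv)
    (htf : IsTorsionFree nt) (hcm : IsCompatible nt m) :
    IsCompatible (secondConn m ε εinv nt) (dualMul m εinv) := by
  have hsurj (X : V) : ∃ x, X = m ε x := ⟨m εinv X, (hF.mul_inv_cancel_left hev.1 X).symm⟩
  intro X Y Z
  obtain ⟨y, rfl⟩ := hsurj Y
  obtain ⟨z, rfl⟩ := hsurj Z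
  refine ⟨?_, ?_⟩
  · obtain ⟨x, rfl⟩ := hsurj X
    let := hF.toCommRing
    have hm (a b : V) : m a b = a * b := rfl
    have hx := hcm.covMul_mul_left_eq hF ε x y z
    have hy := hcm.covMul_mul_left_eq hF ε y x z
    have dyz := hev.covMul_eps hF htf y z
    have dxz := hev.covMul_eps hF htf x z
    have hyx := (hcm y x z).1
    rw [covMul_secondConn_mul_left hF hev.1, covMul_secondConn_mul_left hF hev.1]
    simp only [hm] at hx hy dyz dxz ⊢
    rw [mul_comm y x] at hy
    linear_combination ε * hx - ε * hy + ε * x * dyz - ε * y * dxz - ε * ε * hyx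
  · rw [covMul_secondConn_mul_left hF hev.1, covMul_secondConn_mul_left hF hev.1, hF.comm z y,
      (hcm X y z).2, sub_right_comm (nt (m y z) ε)]

theorem secondConn_eq_add_mul (hF : IsFManifold R m e) (hev : IsEventualIdentity R m e ε εinv)
    (htf : IsTorsionFree nt) (hcm : IsCompatible nt m) (X Y : V) :
    secondConn m ε εinv nt X Y = m ε (nt X (m εinv Y)) +
      m (m ε (nt Y εinv) + m (-nt e e - nt εinv ε + m ⁅e, ε⁆ εinv) Y) X := by
  let := hF.toCommRing
  have hm (a b : V) : m a b = a * b := rfl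
  have he : e = 1 := rfl
  have hinv : ε * εinv = 1 := hev.1
  have hsymm := (hcm Y ε εinv).1
  have h := hev.covMul_eps hF htf Y εinv
  have hunit := hcm.nabla_unit hF Y
  simp only [secondConn, covMul, hm, he] at hsymm h hunit ⊢
  rw [hinv] at hsymm
  rw [mul_comm Y εinv] at hsymm h
  linear_combination X * (hsymm + h - hunit)

end SecondStructureConnection

/-- **Proposition 4.9.** The second structure connection
`∇^F_X(Y) = ε∘∇̃_X(ε⁻¹∘Y) − ∇̃_{ε⁻¹∘Y}(ε)∘X` of an F-manifold `(M, ∘, e)` with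
eventual identity `ε` and compatible torsion-free connection `∇̃` is a
torsion-free connection, compatible with `*` on the dual F-manifold
`(M, *, ε)`, and it belongs to the family `∇^A_X(Y) = ε∘∇̃_X(ε⁻¹∘Y) + A(Y)∘X`
with `A(Y) = ε∘∇̃_Y(ε⁻¹) + V∘Y` for a vector field `V`. -/
theorem statement6 {R V : Type*} [CommRing R] [LieRing V] [Module R V]
    (S : SmoothSetting R V) (m : V → V → V) (e ε εinv : V)
    (hF : IsFManifold R m e) (hev : IsEventualIdentity R m e ε εinv)
    (nt : V → V → V) (hc : IsConnection S nt) (htf : IsTorsionFree nt)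
    (hcm : IsCompatible nt m) :
    IsConnection S (secondConn m ε εinv nt) ∧
      IsTorsionFree (secondConn m ε εinv nt) ∧
      IsCompatible (secondConn m ε εinv nt) (dualMul m εinv) ∧
      ∃ W : V, ∀ X Y : V, secondConn m ε εinv nt X Y =
        m ε (nt X (m εinv Y)) + m (m ε (nt Y εinv) + m W Y) X :=
  ⟨isConnection_secondConn S hF hev.1 hc, isTorsionFree_secondConn hF hev htf hcm,
    isCompatible_secondConn hF hev htf hcm, _, secondConn_eq_add_mul hF hev htf hcm⟩
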